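/- arXiv:2304.01614 — 2 statements merged into one kernel-verified Lean document; each statement's English description precedes it below -/
import Mathlib

section
/- Let m, n, r be positive integers with r ≤ m ≤ n, let A ∈ ℝ^{m×n} have rank r, let M ∈ ℝ^{n×n} be symmetric positive definite, and let N ∈ ℝ^{m×m} be symmetric positive definite. Then the limit as ε → 0⁺ of A (ε M + Aᵀ N A)⁻¹ Aᵀ exists and equals A (Aᵀ N A)† Aᵀ (note that for every ε > 0 the matrix ε M + Aᵀ N A is symmetric positive definite, hence invertible). -/
open Matrix Filter Topology

/-- `B` is the Moore–Penrose pseudoinverse of `A`. -/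
def IsMoorePenroseInv {m n : ℕ} (A : Matrix (Fin m) (Fin n) ℝ)
    (B : Matrix (Fin n) (Fin m) ℝ) : Prop :=
  A * B * A = A ∧ B * A * B = B ∧ (A * B)ᵀ = A * B ∧ (B * A)ᵀ = B * A

lemma coercive' {n : ℕ} {M : Matrix (Fin n) (Fin n) ℝ} (hM : M.PosDef) :
    ∃ c : ℝ, 0 < c ∧ ∀ x : Fin n → ℝ, c * (x ⬝ᵥ x) ≤ x ⬝ᵥ (M *ᵥ x) := by
  rcases Nat.eq_zero_or_pos n with hn | hn
  · subst hn
    exact ⟨1, one_pos, fun x => by simp [dotProduct]⟩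
  · haveI : Nonempty (Fin n) := ⟨⟨0, hn⟩⟩
    have hcont : Continuous fun x : Fin n → ℝ => x ⬝ᵥ (M *ᵥ x) :=
      continuous_id.dotProduct (continuous_const.matrix_mulVec continuous_id)
    obtain ⟨x₀, hx₀S, hmin⟩ := (isCompact_sphere (0 : Fin n → ℝ) 1).exists_isMinOn
      (NormedSpace.sphere_nonempty.mpr zero_le_one) hcont.continuousOn
    have hx₀n : ‖x₀‖ = 1 := mem_sphere_zero_iff_norm.mp hx₀S
    have hx₀0 : x₀ ≠ 0 := by
      intro h; rw [h] at hx₀n; simp at hx₀n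
    have hc0 : 0 < x₀ ⬝ᵥ (M *ᵥ x₀) := by simpa using hM.dotProduct_mulVec_pos hx₀0
    have hn' : (0:ℝ) < n := by exact_mod_cast hn
    refine ⟨(x₀ ⬝ᵥ (M *ᵥ x₀)) / n, div_pos hc0 hn', fun x => ?_⟩
    rcases eq_or_ne x 0 with rfl | hx
    · simp
    · have hnx : 0 < ‖x‖ := norm_pos_iff.mpr hx
      set u := ‖x‖⁻¹ • x with hu
      have hunorm : ‖u‖ = 1 := by
        rw [hu, norm_smul, norm_inv, norm_norm, inv_mul_cancel₀ hnx.ne']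
      have hmin' : x₀ ⬝ᵥ (M *ᵥ x₀) ≤ u ⬝ᵥ (M *ᵥ u) := hmin (mem_sphere_zero_iff_norm.mpr hunorm)
      have hfu : u ⬝ᵥ (M *ᵥ u) = ‖x‖⁻¹^2 * (x ⬝ᵥ (M *ᵥ x)) := by
        rw [hu, mulVec_smul, smul_dotProduct, dotProduct_smul]
        simp [smul_eq_mul]; ring
      rw [hfu] at hmin'
      have hx2 : (0:ℝ) < ‖x‖^2 := by positivity
      have hfx : x₀ ⬝ᵥ (M *ᵥ x₀) * ‖x‖^2 ≤ x ⬝ᵥ (M *ᵥ x) := by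
        have h2 := mul_le_mul_of_nonneg_right hmin' hx2.le
        have h3 : ‖x‖⁻¹ ^ 2 * (x ⬝ᵥ (M *ᵥ x)) * ‖x‖ ^ 2 = x ⬝ᵥ (M *ᵥ x) := by
          field_simp
        rw [h3] at h2
        linarith
      have hdx : x ⬝ᵥ x ≤ n * ‖x‖^2 := by
        have hterm : ∀ i, x i * x i ≤ ‖x‖^2 := fun i => by
          have h1 := norm_le_pi_norm x i
          have : x i * x i = ‖x i‖^2 := by rw [Real.norm_eq_abs, sq_abs]; ring
          rw [this]
          exact pow_le_pow_left₀ (norm_nonneg _) h1 2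
        calc x ⬝ᵥ x = ∑ i, x i * x i := rfl
          _ ≤ ∑ _i : Fin n, ‖x‖^2 := Finset.sum_le_sum (fun i _ => hterm i)
          _ = n * ‖x‖^2 := by simp [Finset.sum_const, Finset.card_univ, nsmul_eq_mul]
      have hxx0 : 0 ≤ x ⬝ᵥ x := Finset.sum_nonneg fun i _ => mul_self_nonneg _
      calc (x₀ ⬝ᵥ (M *ᵥ x₀)) / n * (x ⬝ᵥ x)
          ≤ (x₀ ⬝ᵥ (M *ᵥ x₀)) / n * (n * ‖x‖^2) :=
            mul_le_mul_of_nonneg_left hdx (le_of_lt (div_pos hc0 hn'))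
        _ = x₀ ⬝ᵥ (M *ᵥ x₀) * ‖x‖^2 := by field_simp
        _ ≤ x ⬝ᵥ (M *ᵥ x) := hfx

lemma mp_unique {n : ℕ} {S B C : Matrix (Fin n) (Fin n) ℝ}
    (hB : IsMoorePenroseInv S B) (hC : IsMoorePenroseInv S C) : B = C := by
  obtain ⟨hB1, hB2, hB3, hB4⟩ := hB
  obtain ⟨hC1, hC2, hC3, hC4⟩ := hC
  have hSB : S * B = S * C := by
    calc S * B = (S * C * S) * B := by rw [hC1]
    _ = (S * C) * (S * B) := by rw [Matrix.mul_assoc, Matrix.mul_assoc]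
    _ = (S * C)ᵀ * (S * B)ᵀ := by rw [hC3, hB3]
    _ = ((S * B) * (S * C))ᵀ := by simp [transpose_mul, Matrix.mul_assoc]
    _ = ((S * B * S) * C)ᵀ := by simp [Matrix.mul_assoc]
    _ = (S * C)ᵀ := by rw [hB1]
    _ = S * C := hC3
  have hBS : B * S = C * S := by
    calc B * S = B * (S * C * S) := by rw [hC1]
    _ = (B * S) * (C * S) := by simp [Matrix.mul_assoc]
    _ = (B * S)ᵀ * (C * S)ᵀ := by rw [hB4, hC4]
    _ = ((C * S) * (B * S))ᵀ := by simp [transpose_mul, Matrix.mul_assoc]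
    _ = ((C * (S * B * S)))ᵀ := by simp [Matrix.mul_assoc]
    _ = (C * S)ᵀ := by rw [hB1]
    _ = C * S := hC4
  calc B = B * S * B := hB2.symm
  _ = B * (S * C) := by rw [Matrix.mul_assoc, hSB]
  _ = (B * S) * C := by rw [Matrix.mul_assoc]
  _ = C * S * C := by rw [hBS]
  _ = C := hC2

/-- Lemma 2.3: for `A ∈ ℝ^{m×n}` of rank `r ≤ m ≤ n` and `M`, `N` symmetric positive
definite, for every `ε > 0` the matrix `ε M + Aᵀ N A` is symmetric positive definite
(hence invertible), and `A (ε M + Aᵀ N A)⁻¹ Aᵀ → A (Aᵀ N A)† Aᵀ` as `ε → 0⁺`. -/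
theorem limit_pinv (m n r : ℕ) (hr : 0 < r) (hrm : r ≤ m) (hmn : m ≤ n)
    (A : Matrix (Fin m) (Fin n) ℝ) (hrank : A.rank = r)
    (M : Matrix (Fin n) (Fin n) ℝ) (hM : M.PosDef)
    (N : Matrix (Fin m) (Fin m) ℝ) (hN : N.PosDef)
    (Q : Matrix (Fin n) (Fin n) ℝ)
    (hQ : IsMoorePenroseInv (Aᵀ * N * A) Q) :
    (∀ ε : ℝ, 0 < ε → (ε • M + Aᵀ * N * A).PosDef) ∧
      Tendsto (fun ε : ℝ => A * (ε • M + Aᵀ * N * A)⁻¹ * Aᵀ)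
        (𝓝[>] (0 : ℝ)) (𝓝 (A * Q * Aᵀ)) := by
  obtain ⟨hQ1, hQ2, hQ3, hQ4⟩ := hQ
  set S := Aᵀ * N * A with hSdef
  -- basic symmetry facts
  have hNsym : Nᵀ = N := by
    have := hN.1
    rwa [← conjTranspose_eq_transpose_of_trivial]
  have hSsym : Sᵀ = S := by
    rw [hSdef, transpose_mul, transpose_mul, transpose_transpose, hNsym, Matrix.mul_assoc]
  have hSpsd : S.PosSemidef := by
    have h := (hN.posSemidef).conjTranspose_mul_mul_same A
    rwa [conjTranspose_eq_transpose_of_trivial] at h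
  -- kernel of S is contained in kernel of A
  have hker : ∀ x : Fin n → ℝ, S *ᵥ x = 0 → A *ᵥ x = 0 := by
    intro x hx
    by_contra h
    have hpos : 0 < (A *ᵥ x) ⬝ᵥ (N *ᵥ (A *ᵥ x)) := by simpa using hN.dotProduct_mulVec_pos h
    have hzero : x ⬝ᵥ (S *ᵥ x) = 0 := by rw [hx, dotProduct_zero]
    have hiden : x ⬝ᵥ (S *ᵥ x) = (A *ᵥ x) ⬝ᵥ (N *ᵥ (A *ᵥ x)) := by
      rw [hSdef, ← mulVec_mulVec, dotProduct_mulVec, ← vecMul_vecMul, vecMul_transpose,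
        ← dotProduct_mulVec]
    rw [hzero] at hiden
    linarith [hpos, hiden]
  clear_value S
  clear hSdef
  -- part 1 : positive definiteness
  have part1 : ∀ ε : ℝ, 0 < ε → (ε • M + S).PosDef := by
    intro ε hε
    refine Matrix.PosDef.add_posSemidef (.of_dotProduct_mulVec_pos ?_ ?_) hSpsd
    · show (ε • M)ᴴ = ε • M
      rw [conjTranspose_smul, star_trivial, hM.1.eq]
    · intro x hx
      have h1 : (ε • M) *ᵥ x = ε • (M *ᵥ x) := smul_mulVec ε M x
      rw [h1, dotProduct_smul]
      exact smul_pos hε (hM.dotProduct_mulVec_pos hx)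
  refine ⟨part1, ?_⟩
  -- A * (Q * S) = A
  have hmv : ∀ X : Matrix (Fin m) (Fin n) ℝ, (∀ v, X *ᵥ v = 0) → X = 0 := by
    intro X h
    ext i j
    have := congrFun (h (Pi.single j 1)) i
    simpa [mulVec_single] using this
  have hAQS : A * (Q * S) = A := by
    have h0 : A * (1 - Q * S) = 0 := by
      apply hmv
      intro v
      rw [← mulVec_mulVec]
      apply hker
      rw [mulVec_mulVec, Matrix.mul_sub, Matrix.mul_one, ← Matrix.mul_assoc, hQ1, sub_self,
        Matrix.zero_mulVec]
    rw [Matrix.mul_sub, Matrix.mul_one] at h0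
    have := sub_eq_zero.mp h0
    exact this.symm
  -- Q is symmetric
  have hQT : IsMoorePenroseInv S Qᵀ := by
    refine ⟨?_, ?_, ?_, ?_⟩
    · have h := congrArg transpose hQ1
      rw [transpose_mul, transpose_mul, hSsym] at h
      rw [Matrix.mul_assoc]
      exact h
    · have h := congrArg transpose hQ2
      rw [transpose_mul, transpose_mul, hSsym] at h
      rw [Matrix.mul_assoc]
      exact h
    · rw [transpose_mul, transpose_transpose]
      calc Q * Sᵀ = Q * S := by rw [hSsym]
      _ = (Q * S)ᵀ := hQ4.symm
      _ = Sᵀ * Qᵀ := by rw [transpose_mul]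
      _ = S * Qᵀ := by rw [hSsym]
    · rw [transpose_mul, transpose_transpose]
      calc Sᵀ * Q = S * Q := by rw [hSsym]
      _ = (S * Q)ᵀ := hQ3.symm
      _ = Qᵀ * Sᵀ := by rw [transpose_mul]
      _ = Qᵀ * S := by rw [hSsym]
  have hQsym : Qᵀ = Q := mp_unique hQT ⟨hQ1, hQ2, hQ3, hQ4⟩
  -- S * (Q * Aᵀ) = Aᵀ
  have hSQA : S * (Q * Aᵀ) = Aᵀ := by
    have h := congrArg transpose hAQS
    rwa [transpose_mul, transpose_mul, hSsym, hQsym, Matrix.mul_assoc] at h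
  obtain ⟨c, hc0, hc⟩ := coercive' hM
  -- entrywise bound for the inverse
  have hbound : ∀ ε : ℝ, 0 < ε → ∀ i j, |((ε • M + S)⁻¹) i j| ≤ 1 / (ε * c) := by
    intro ε hε i j
    set P := ε • M + S with hP
    have hPpd := part1 ε hε
    have hdet : IsUnit P.det := hPpd.det_pos.ne'.isUnit
    have hPR : P * P⁻¹ = 1 := mul_nonsing_inv P hdet
    set x := P⁻¹ *ᵥ Pi.single j 1 with hxdef
    have h1x : P *ᵥ x = Pi.single j 1 := by
      rw [hxdef, mulVec_mulVec, hPR, one_mulVec]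
    have hxj : x ⬝ᵥ (P *ᵥ x) = x j := by
      rw [h1x, dotProduct_single, mul_one]
    have hlow : ε * c * (x ⬝ᵥ x) ≤ x ⬝ᵥ (P *ᵥ x) := by
      have hMx := hc x
      have hSx : 0 ≤ x ⬝ᵥ (S *ᵥ x) := by simpa using hSpsd.dotProduct_mulVec_nonneg x
      have hexp : x ⬝ᵥ (P *ᵥ x) = ε * (x ⬝ᵥ (M *ᵥ x)) + x ⬝ᵥ (S *ᵥ x) := by
        rw [hP, add_mulVec, dotProduct_add, smul_mulVec, dotProduct_smul, smul_eq_mul]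
      rw [hexp]
      nlinarith [hε]
    have hxx : 0 ≤ x ⬝ᵥ x := Finset.sum_nonneg fun k _ => mul_self_nonneg _
    have hsqj : (x j) * (x j) ≤ x ⬝ᵥ x := by
      have := Finset.single_le_sum (f := fun k => x k * x k)
        (fun k _ => mul_self_nonneg (x k)) (Finset.mem_univ j)
      simpa [dotProduct] using this
    have hsqi : (x i) * (x i) ≤ x ⬝ᵥ x := by
      have := Finset.single_le_sum (f := fun k => x k * x k)
        (fun k _ => mul_self_nonneg (x k)) (Finset.mem_univ i)
      simpa [dotProduct] using this
    rw [hxj] at hlow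
    have hεc : 0 < ε * c := mul_pos hε hc0
    have hRij : P⁻¹ i j = x i := by
      rw [hxdef, mulVec_single]
      simp
    rw [hRij]
    have hxj0 : 0 ≤ x j := le_trans (mul_nonneg hεc.le hxx) hlow
    have h1 : (ε * c) * (x j * x j) ≤ x j :=
      le_trans (mul_le_mul_of_nonneg_left hsqj hεc.le) hlow
    have hb1 : (ε * c) * (x j) ≤ 1 := by
      rcases eq_or_lt_of_le hxj0 with h0 | h0
      · rw [← h0, mul_zero]; exact zero_le_one
      · have h2 : ((ε * c) * x j) * x j ≤ 1 * x j := by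
          calc ((ε * c) * x j) * x j = (ε * c) * (x j * x j) := by ring
          _ ≤ x j := h1
          _ = 1 * x j := (one_mul _).symm
        exact le_of_mul_le_mul_right h2 h0
    have ha2 : (x i)^2 ≤ (1 / (ε * c))^2 := by
      have hX : (ε * c)^2 * (x ⬝ᵥ x) ≤ 1 := by
        calc (ε * c)^2 * (x ⬝ᵥ x) = (ε * c) * ((ε * c) * (x ⬝ᵥ x)) := by ring
        _ ≤ (ε * c) * x j := mul_le_mul_of_nonneg_left hlow hεc.le
        _ ≤ 1 := hb1
      rw [div_pow, one_pow, le_div_iff₀ (by positivity)]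
      calc (x i)^2 * (ε * c)^2 = (ε * c)^2 * (x i * x i) := by ring
      _ ≤ (ε * c)^2 * (x ⬝ᵥ x) := mul_le_mul_of_nonneg_left hsqi (by positivity)
      _ ≤ 1 := hX
    have := Real.sqrt_le_sqrt ha2
    rwa [Real.sqrt_sq_eq_abs, Real.sqrt_sq (by positivity)] at this
  -- the scaled inverse tends to zero
  have htend0 : Tendsto (fun ε : ℝ => (ε : ℝ) ^ 2 • ((ε • M + S)⁻¹)) (𝓝[>] (0:ℝ))
      (𝓝 (0 : Matrix (Fin n) (Fin n) ℝ)) := by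
    apply tendsto_pi_nhds.mpr
    intro i
    apply tendsto_pi_nhds.mpr
    intro j
    have hgz : Tendsto (fun ε : ℝ => ε / c) (𝓝[>] (0:ℝ)) (𝓝 0) := by
      have h : Tendsto (fun ε : ℝ => ε / c) (𝓝 (0:ℝ)) (𝓝 ((0:ℝ) / c)) :=
        tendsto_id.div_const c
      rw [zero_div] at h
      exact h.mono_left nhdsWithin_le_nhds
    have hev : ∀ᶠ ε in 𝓝[>] (0:ℝ),
        ‖(ε ^ 2 • ((ε • M + S)⁻¹)) i j‖ ≤ ε / c := by
      filter_upwards [self_mem_nhdsWithin] with ε hε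
      have hε' : (0:ℝ) < ε := hε
      have hb := hbound ε hε' i j
      have hentry : ((ε ^ 2 • ((ε • M + S)⁻¹)) i j) = ε ^ 2 * ((ε • M + S)⁻¹) i j := rfl
      rw [Real.norm_eq_abs, hentry, abs_mul, abs_of_nonneg (sq_nonneg ε)]
      calc ε ^ 2 * |((ε • M + S)⁻¹) i j| ≤ ε ^ 2 * (1 / (ε * c)) :=
            mul_le_mul_of_nonneg_left hb (sq_nonneg ε)
      _ = ε / c := by
            field_simp
    have hsq := squeeze_zero_norm' hev hgz
    simpa using hsq
  -- the key algebraic identity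
  have key : ∀ ε : ℝ, 0 < ε →
      A * (ε • M + S)⁻¹ * Aᵀ
        = A * Q * Aᵀ - ε • (A * Q * (M * (Q * Aᵀ)))
          + (A * Q * M) * (ε ^ 2 • ((ε • M + S)⁻¹)) * (M * (Q * Aᵀ)) := by
    intro ε hε
    set P := ε • M + S with hP
    have hPpd := part1 ε hε
    have hdet : IsUnit P.det := hPpd.det_pos.ne'.isUnit
    have hPR : P * P⁻¹ = 1 := mul_nonsing_inv P hdet
    have hRP : P⁻¹ * P = 1 := nonsing_inv_mul P hdet
    have hRS : P⁻¹ * S = 1 - ε • (P⁻¹ * M) := by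
      have h := hRP
      rw [hP, Matrix.mul_add, Matrix.mul_smul] at h
      exact eq_sub_of_add_eq' h
    have hSR : S * P⁻¹ = 1 - ε • (M * P⁻¹) := by
      have h := hPR
      rw [hP, Matrix.add_mul, Matrix.smul_mul] at h
      exact eq_sub_of_add_eq' h
    have hAR : A * P⁻¹ = A * Q - ε • (A * Q * (M * P⁻¹)) := by
      conv_lhs => rw [← hAQS]
      rw [Matrix.mul_assoc A (Q * S) P⁻¹, Matrix.mul_assoc Q S P⁻¹, hSR]
      simp [Matrix.mul_sub, Matrix.mul_smul, Matrix.mul_assoc]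
    have hRA : P⁻¹ * Aᵀ = Q * Aᵀ - ε • (P⁻¹ * (M * (Q * Aᵀ))) := by
      conv_lhs => rw [← hSQA]
      rw [← Matrix.mul_assoc P⁻¹ S (Q * Aᵀ), hRS]
      simp [Matrix.sub_mul, Matrix.smul_mul, Matrix.mul_assoc]
    calc A * P⁻¹ * Aᵀ = A * (P⁻¹ * Aᵀ) := Matrix.mul_assoc _ _ _
    _ = A * (Q * Aᵀ) - ε • (A * (P⁻¹ * (M * (Q * Aᵀ)))) := by
        rw [hRA, Matrix.mul_sub, Matrix.mul_smul]
    _ = A * (Q * Aᵀ) - ε • ((A * P⁻¹) * (M * (Q * Aᵀ))) := by rw [Matrix.mul_assoc]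
    _ = A * (Q * Aᵀ) - ε • ((A * Q - ε • (A * Q * (M * P⁻¹))) * (M * (Q * Aᵀ))) := by
        rw [hAR]
    _ = A * Q * Aᵀ - ε • (A * Q * (M * (Q * Aᵀ)))
          + (A * Q * M) * (ε ^ 2 • P⁻¹) * (M * (Q * Aᵀ)) := by
        simp only [Matrix.sub_mul, Matrix.smul_mul, Matrix.mul_smul, smul_sub, smul_smul,
          Matrix.mul_assoc, sq]
        abel
  -- conclusion
  have hcontmul : Continuous fun X : Matrix (Fin n) (Fin n) ℝ =>
      (A * Q * M) * X * (M * (Q * Aᵀ)) :=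
    (continuous_const.matrix_mul continuous_id).matrix_mul continuous_const
  have h3 : Tendsto (fun ε : ℝ => (A * Q * M) * (ε ^ 2 • ((ε • M + S)⁻¹)) * (M * (Q * Aᵀ)))
      (𝓝[>] (0:ℝ)) (𝓝 0) := by
    have h := (hcontmul.tendsto 0).comp htend0
    have h0 : (A * Q * M) * (0 : Matrix (Fin n) (Fin n) ℝ) * (M * (Q * Aᵀ)) = 0 := by simp
    rw [h0] at h
    exact h
  have h2 : Tendsto (fun ε : ℝ => ε • (A * Q * (M * (Q * Aᵀ)))) (𝓝[>] (0:ℝ)) (𝓝 0) := by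
    have h : Tendsto (fun ε : ℝ => ε • (A * Q * (M * (Q * Aᵀ)))) (𝓝 (0:ℝ))
        (𝓝 ((0:ℝ) • (A * Q * (M * (Q * Aᵀ))))) :=
      (continuous_id.smul continuous_const).tendsto (0 : ℝ)
    rw [zero_smul] at h
    exact h.mono_left nhdsWithin_le_nhds
  have hfinal : Tendsto (fun ε : ℝ => A * Q * Aᵀ - ε • (A * Q * (M * (Q * Aᵀ)))
      + (A * Q * M) * (ε ^ 2 • ((ε • M + S)⁻¹)) * (M * (Q * Aᵀ)))
      (𝓝[>] (0:ℝ)) (𝓝 (A * Q * Aᵀ)) := by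
    have h := (((tendsto_const_nhds :
      Tendsto (fun _ : ℝ => A * Q * Aᵀ) (𝓝[>] (0:ℝ)) (𝓝 (A * Q * Aᵀ)))).sub h2).add h3
    simpa using h
  apply hfinal.congr'
  filter_upwards [self_mem_nhdsWithin] with ε hε
  exact (key ε hε).symm
end

section
/- The dual function g is L_g-Lipschitz smooth with L_g = ρ/μ: for all λ₁, λ₂ ∈ ℝᴺ, ‖∇g(λ₁) − ∇g(λ₂)‖ ≤ (ρ/μ) ‖λ₁ − λ₂‖. -/
open Matrix Set
open scoped RealInnerProductSpace

noncomputable section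

section

open scoped ComplexOrder

/-- The positive semidefinite square root of a PSD matrix, as `Matrix.PosSemidef.sqrt` was defined
in Mathlib (December 2024); it has since been removed from Mathlib. -/
def Matrix.PosSemidef.sqrt {n 𝕜 : Type*} [Fintype n] [RCLike 𝕜] [DecidableEq n]
    {A : Matrix n n 𝕜} (hA : A.PosSemidef) : Matrix n n 𝕜 :=
  hA.1.eigenvectorUnitary.1 * diagonal ((↑) ∘ (√·) ∘ hA.1.eigenvalues) *
    (star hA.1.eigenvectorUnitary : Matrix n n 𝕜)

end

section AuxLemmas

open scoped Pointwise

variable {N : ℕ}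

lemma inner_toEuclideanLin' (M : Matrix (Fin N) (Fin N) ℝ) (x y : EuclideanSpace ℝ (Fin N)) :
    ⟪x, Matrix.toEuclideanLin M y⟫ =
      dotProduct (WithLp.equiv 2 (Fin N → ℝ) x) (M *ᵥ (WithLp.equiv 2 (Fin N → ℝ) y)) := by
  rw [EuclideanSpace.inner_eq_star_dotProduct, toEuclideanLin_apply]
  simp
  exact dotProduct_comm _ _

lemma sqrt_isHermitian_aux (Z : Matrix (Fin N) (Fin N) ℝ) (hZ : Z.PosSemidef) :
    hZ.sqrt.IsHermitian := by
  unfold Matrix.PosSemidef.sqrt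
  rw [IsHermitian, conjTranspose_mul, conjTranspose_mul, star_eq_conjTranspose,
    conjTranspose_conjTranspose, diagonal_conjTranspose, star_trivial, mul_assoc]

lemma sqrt_mul_self_aux (Z : Matrix (Fin N) (Fin N) ℝ) (hZ : Z.PosSemidef) :
    hZ.sqrt * hZ.sqrt = Z := by
  unfold Matrix.PosSemidef.sqrt
  conv_rhs => rw [hZ.1.spectral_theorem, Unitary.conjStarAlgAut_apply]
  have hU := Unitary.coe_star_mul_self hZ.1.eigenvectorUnitary
  set U : Matrix (Fin N) (Fin N) ℝ := hZ.1.eigenvectorUnitary.1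
  set D : Matrix (Fin N) (Fin N) ℝ :=
    Matrix.diagonal (RCLike.ofReal ∘ (fun x => √x) ∘ hZ.1.eigenvalues) with hDdef
  have hD : D * D = Matrix.diagonal (RCLike.ofReal ∘ hZ.1.eigenvalues : Fin N → ℝ) := by
    rw [hDdef, diagonal_mul_diagonal]
    congr 1; funext i
    simp [Real.mul_self_sqrt (hZ.eigenvalues_nonneg i)]
  calc U * D * star U * (U * D * star U) = U * D * (star U * U) * D * star U := by
        simp only [mul_assoc]
    _ = _ := by rw [hU, mul_one, mul_assoc U D D, hD]

lemma quad_bound (Z : Matrix (Fin N) (Fin N) ℝ) (hZ : Z.PosSemidef) (ρ : ℝ)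
    (hρmax : ∀ c ∈ spectrum ℝ Z, c ≤ ρ) (u : EuclideanSpace ℝ (Fin N)) :
    ⟪u, Matrix.toEuclideanLin Z u⟫ ≤ ρ * ‖u‖ ^ 2 := by
  set M : Matrix (Fin N) (Fin N) ℝ := ρ • (1 : Matrix (Fin N) (Fin N) ℝ) - Z with hMdef
  have hM : M.IsHermitian := by
    have h1 : (ρ • (1 : Matrix (Fin N) (Fin N) ℝ)).IsHermitian := by
      simp [Matrix.IsHermitian, Matrix.conjTranspose_smul]
    exact h1.sub hZ.1
  have hMalg : M = algebraMap ℝ (Matrix (Fin N) (Fin N) ℝ) ρ - Z := by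
    rw [Algebra.algebraMap_eq_smul_one]
  have hMspec : spectrum ℝ M = ({ρ} : Set ℝ) - spectrum ℝ Z := by
    rw [hMalg, ← spectrum.singleton_sub_eq]
  have hMpsd : M.PosSemidef := by
    apply hM.posSemidef_iff_eigenvalues_nonneg.mpr
    intro i
    have hmem : hM.eigenvalues i ∈ spectrum ℝ M := hM.eigenvalues_mem_spectrum_real i
    rw [hMspec] at hmem
    obtain ⟨a, ha, b, hb, hab⟩ := Set.mem_sub.1 hmem
    rw [Set.mem_singleton_iff] at ha
    subst ha
    have := hρmax b hb
    simp only [Pi.zero_apply]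
    linarith [this, hab]
  have h0 : 0 ≤ ⟪u, Matrix.toEuclideanLin M u⟫ := by
    rw [inner_toEuclideanLin']
    simpa using hMpsd.dotProduct_mulVec_nonneg (WithLp.equiv 2 (Fin N → ℝ) u)
  have hMu : Matrix.toEuclideanLin M u = ρ • u - Matrix.toEuclideanLin Z u := by
    rw [hMdef, map_sub, _root_.map_smul]
    simp [toEuclideanLin_apply]
  rw [hMu, inner_sub_right, real_inner_smul_right, real_inner_self_eq_norm_sq] at h0
  linarith

lemma quad_eq_norm_sq (Z : Matrix (Fin N) (Fin N) ℝ) (hZ : Z.PosSemidef)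
    (x : EuclideanSpace ℝ (Fin N)) :
    ⟪x, Matrix.toEuclideanLin Z x⟫ = ‖Matrix.toEuclideanLin hZ.sqrt x‖ ^ 2 := by
  have hsym : (Matrix.toEuclideanLin hZ.sqrt).IsSymmetric :=
    Matrix.isHermitian_iff_isSymmetric.1 (sqrt_isHermitian_aux Z hZ)
  have hSS : Matrix.toEuclideanLin hZ.sqrt (Matrix.toEuclideanLin hZ.sqrt x)
      = Matrix.toEuclideanLin Z x := by
    simp [toEuclideanLin_apply, mulVec_mulVec, sqrt_mul_self_aux Z hZ]
  rw [← real_inner_self_eq_norm_sq, hsym x (Matrix.toEuclideanLin hZ.sqrt x), hSS]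

lemma normSq_smul_convex {E : Type*} [NormedAddCommGroup E] [InnerProductSpace ℝ E]
    (u v : E) {a b : ℝ} (ha : 0 ≤ a) (hb : 0 ≤ b) (hab : a + b = 1) :
    ‖a • u + b • v‖ ^ 2 ≤ a * ‖u‖ ^ 2 + b * ‖v‖ ^ 2 := by
  obtain rfl : b = 1 - a := by linarith
  have h1 := norm_add_sq_real (a • u) ((1 - a) • v)
  rw [real_inner_smul_left, real_inner_smul_right, norm_smul, norm_smul,
    Real.norm_of_nonneg ha, Real.norm_of_nonneg hb] at h1
  have h2 := norm_sub_sq_real u v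
  have h3 : 0 ≤ a * (1 - a) * (‖u‖ ^ 2 - 2 * ⟪u, v⟫ + ‖v‖ ^ 2) := by
    rw [← h2]; positivity
  nlinarith [h1, h3]

lemma strongMin {E : Type*} [NormedAddCommGroup E] [InnerProductSpace ℝ E]
    {φ : E → ℝ} {m : ℝ} (h : StrongConvexOn Set.univ m φ) {x₀ : E}
    (hmin : IsMinOn φ Set.univ x₀) (y : E) :
    φ x₀ + m / 2 * ‖x₀ - y‖ ^ 2 ≤ φ y := by
  set c := m / 2 * ‖x₀ - y‖ ^ 2 with hc
  have key : ∀ a : ℝ, a ∈ Set.Ioo (0:ℝ) 1 → φ x₀ + a * c ≤ φ y := by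
    rintro a ⟨ha, ha1⟩
    have hb : (0:ℝ) < 1 - a := by linarith
    have h2 := h.2 (Set.mem_univ x₀) (Set.mem_univ y) ha.le hb.le (by ring)
    have hm := hmin (Set.mem_univ (a • x₀ + (1-a) • y))
    simp only [smul_eq_mul] at h2
    have : φ x₀ ≤ a * φ x₀ + (1-a) * φ y - a * (1-a) * c := le_trans hm h2
    nlinarith
  have htend : Filter.Tendsto (fun a : ℝ => φ x₀ + a * c) (nhdsWithin 1 (Set.Iio 1))
      (nhds (φ x₀ + 1 * c)) := by
    apply Filter.Tendsto.mono_left _ nhdsWithin_le_nhds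
    exact (continuous_const.add (continuous_id.mul continuous_const)).tendsto 1
  have hev : ∀ᶠ a in nhdsWithin (1:ℝ) (Set.Iio 1), φ x₀ + a * c ≤ φ y := by
    filter_upwards [Ioo_mem_nhdsLT_of_mem (by constructor <;> norm_num : (1:ℝ) ∈ Set.Ioc 0 1)]
      with a ha using key a ha
  have := le_of_tendsto htend hev
  linarith

end AuxLemmas

/-- The augmented Lagrangian `L̃_α(x, λ) = f(x) + ⟨λ, Z^{1/2} x⟩ + (α/2) xᵀ Z x`,
where `Z^{1/2}` is the positive semidefinite square root of `Z`. -/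
def augLag (N : ℕ) (f : EuclideanSpace ℝ (Fin N) → ℝ) (α : ℝ)
    (Z : Matrix (Fin N) (Fin N) ℝ) (hZ : Z.PosSemidef)
    (x lam : EuclideanSpace ℝ (Fin N)) : ℝ :=
  f x + ⟪lam, Matrix.toEuclideanLin hZ.sqrt x⟫ +
    α / 2 * ⟪x, Matrix.toEuclideanLin Z x⟫

/-- The dual function is `L_g`-Lipschitz smooth with `L_g = ρ/μ`: the dual gradient `∇g(λ) = Z^{1/2} x*(λ)` is `(ρ/μ)`-Lipschitz in `λ`. -/
theorem dual_gradient_lipschitz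
    (N : ℕ) (hN : 0 < N)
    (f : EuclideanSpace ℝ (Fin N) → ℝ) (μ L : ℝ) (hμ : 0 < μ) (hL : 0 < L)
    (hf : ContDiff ℝ 2 f)
    (hsc : StrongConvexOn Set.univ μ f)
    (hlip : LipschitzWith L.toNNReal (gradient f))
    (Z : Matrix (Fin N) (Fin N) ℝ) (hZ : Z.PosSemidef) (hZ0 : Z ≠ 0)
    (ρ σ : ℝ)
    (hρ : ρ ∈ spectrum ℝ Z) (hρmax : ∀ c ∈ spectrum ℝ Z, c ≤ ρ)
    (hσ : σ ∈ spectrum ℝ Z) (hσpos : 0 < σ) (hσmin : ∀ c ∈ spectrum ℝ Z, 0 < c → σ ≤ c)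
    (α : ℝ) (hα : 0 < α)
    (xstar : EuclideanSpace ℝ (Fin N) → EuclideanSpace ℝ (Fin N))
    (hxstar : ∀ lam, IsMinOn (fun x => augLag N f α Z hZ x lam) Set.univ (xstar lam))
    :
    ∀ lam₁ lam₂ : EuclideanSpace ℝ (Fin N),
      ‖Matrix.toEuclideanLin hZ.sqrt (xstar lam₁) -
          Matrix.toEuclideanLin hZ.sqrt (xstar lam₂)‖ ≤ ρ / μ * ‖lam₁ - lam₂‖ := by
  intro lam₁ lam₂
  set S : EuclideanSpace ℝ (Fin N) →ₗ[ℝ] EuclideanSpace ℝ (Fin N) :=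
    Matrix.toEuclideanLin hZ.sqrt with hSdef
  have hρpos : 0 < ρ := lt_of_lt_of_le hσpos (hρmax σ hσ)
  -- strong convexity of the augmented Lagrangian in x
  have hstrong : ∀ lam, StrongConvexOn Set.univ μ (fun x => augLag N f α Z hZ x lam) := by
    intro lam
    have hlin : ConvexOn ℝ Set.univ (fun x : EuclideanSpace ℝ (Fin N) => ⟪lam, S x⟫) := by
      refine ⟨convex_univ, fun x _ y _ a b ha hb hab => le_of_eq ?_⟩
      show ⟪lam, S (a • x + b • y)⟫ = a • ⟪lam, S x⟫ + b • ⟪lam, S y⟫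
      rw [map_add, _root_.map_smul, _root_.map_smul, inner_add_right, real_inner_smul_right,
        real_inner_smul_right, smul_eq_mul, smul_eq_mul]
    have hquad : ConvexOn ℝ Set.univ
        (fun x : EuclideanSpace ℝ (Fin N) => α / 2 * ⟪x, Matrix.toEuclideanLin Z x⟫) := by
      have hpow : ConvexOn ℝ Set.univ (fun x : EuclideanSpace ℝ (Fin N) => ‖S x‖ ^ 2) := by
        refine ⟨convex_univ, fun x _ y _ a b ha hb hab => ?_⟩
        show ‖S (a • x + b • y)‖ ^ 2 ≤ a • ‖S x‖ ^ 2 + b • ‖S y‖ ^ 2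
        rw [map_add, _root_.map_smul, _root_.map_smul, smul_eq_mul, smul_eq_mul]
        exact normSq_smul_convex (S x) (S y) ha hb hab
      have := hpow.smul (by positivity : (0:ℝ) ≤ α / 2)
      refine ConvexOn.congr this fun x _ => ?_
      rw [quad_eq_norm_sq Z hZ x]
      simp [smul_eq_mul, hSdef]
    have hg : ConvexOn ℝ Set.univ (fun x : EuclideanSpace ℝ (Fin N) =>
        ⟪lam, S x⟫ + α / 2 * ⟪x, Matrix.toEuclideanLin Z x⟫) := hlin.add hquad
    have := hsc.add ((uniformConvexOn_zero).2 hg)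
    have heq : (fun r : ℝ => μ / 2 * r ^ 2) = ((fun r : ℝ => μ / 2 * r ^ 2) + 0) := by
      funext r; simp
    unfold StrongConvexOn
    rw [heq]
    convert this using 1
    funext x
    simp [augLag, add_assoc, hSdef]
  -- key monotonicity estimate
  set x₁ := xstar lam₁
  set x₂ := xstar lam₂
  have h₁ := strongMin (hstrong lam₁) (hxstar lam₁) x₂
  have h₂ := strongMin (hstrong lam₂) (hxstar lam₂) x₁
  set d := ‖x₁ - x₂‖ with hd
  have hd₂ : ‖x₂ - x₁‖ = d := norm_sub_rev _ _
  rw [hd₂] at h₂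
  have hdiff : ∀ y, augLag N f α Z hZ y lam₁ - augLag N f α Z hZ y lam₂
      = ⟪lam₁ - lam₂, S y⟫ := by
    intro y
    simp only [augLag, inner_sub_left]
    ring
  have hkey : μ * d ^ 2 ≤ ⟪lam₁ - lam₂, S x₂ - S x₁⟫ := by
    have e₁ := hdiff x₁
    have e₂ := hdiff x₂
    rw [inner_sub_right]
    simp only [augLag] at h₁ h₂ e₁ e₂ ⊢
    linarith
  have hcs : ⟪lam₁ - lam₂, S x₂ - S x₁⟫ ≤ ‖lam₁ - lam₂‖ * ‖S x₁ - S x₂‖ := by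
    have := real_inner_le_norm (lam₁ - lam₂) (S x₂ - S x₁)
    rwa [norm_sub_rev (S x₂)] at this
  set w := S x₁ - S x₂ with hw
  have hwsq : ‖w‖ ^ 2 ≤ ρ * d ^ 2 := by
    have : w = S (x₁ - x₂) := by rw [map_sub]
    rw [this, ← quad_eq_norm_sq Z hZ (x₁ - x₂)]
    exact quad_bound Z hZ ρ hρmax (x₁ - x₂)
  rcases eq_or_ne w 0 with hw0 | hw0
  · rw [hw0, norm_zero]
    positivity
  · have hwpos : 0 < ‖w‖ := norm_pos_iff.2 hw0
    have h1 : μ * d ^ 2 ≤ ‖lam₁ - lam₂‖ * ‖w‖ := le_trans hkey hcs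
    have hmain : μ * ‖w‖ * ‖w‖ ≤ ρ * ‖lam₁ - lam₂‖ * ‖w‖ := by
      nlinarith [hwsq, h1, hρpos, hμ, hwpos]
    have : μ * ‖w‖ ≤ ρ * ‖lam₁ - lam₂‖ := le_of_mul_le_mul_right hmain hwpos
    rw [div_mul_eq_mul_div, le_div_iff₀ hμ]
    linarith

end
end
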